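/- Let k be a field of characteristic zero, let A be a commutative noetherian Jacobson ring, and let R be a commutative affine (finitely generated) k-algebra equipped with a Poisson bracket. Then any homeomorphism φ : maxspec A → P.prim R extends uniquely to a homeomorphism Spec A → P.spec R. -/

import Mathlib

/-!
Both spaces are T0 and sober, and the distinguished subspace is very dense in each (every closed
set is the closure of its trace on it). For `Spec A` this is the Jacobson property. For `P.spec R`,
every Poisson prime is the intersection of the Poisson cores of the maximal ideals above it, and
these cores are prime: in characteristic zero the radical of a Poisson ideal is Poisson, hence so
are its minimal primes.

Closed sets are determined by their traces on a very dense subset, so a continuous map from a very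
dense subspace into a sober T0 space extends uniquely and continuously: send `x` to the generic
point of the closure of the image of the special points specializing from `x`. Extending `φ` and
`φ⁻¹` gives mutually inverse homeomorphisms.
-/

/-- A Poisson bracket on a commutative `k`-algebra `R`: a `k`-bilinear,
antisymmetric map satisfying the Jacobi and Leibniz identities. -/
structure PoissonBracket (k : Type*) (R : Type*) [CommRing k] [CommRing R] [Algebra k R] where
  bracket : R → R → R
  add_left : ∀ a b c : R, bracket (a + b) c = bracket a c + bracket b c
  add_right : ∀ a b c : R, bracket a (b + c) = bracket a b + bracket a c
  smul_left : ∀ (t : k) (a b : R), bracket (t • a) b = t • bracket a b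
  smul_right : ∀ (t : k) (a b : R), bracket a (t • b) = t • bracket a b
  antisymm : ∀ a b : R, bracket a b = - bracket b a
  jacobi : ∀ a b c : R,
    bracket a (bracket b c) + bracket b (bracket c a) + bracket c (bracket a b) = 0
  leibniz : ∀ a b c : R, bracket a (b * c) = bracket a b * c + b * bracket a c

/-- An ideal `I` is a Poisson ideal if `{R, I} ⊆ I`. -/
def IsPoissonIdeal {k R : Type*} [CommRing k] [CommRing R] [Algebra k R]
    (B : PoissonBracket k R) (I : Ideal R) : Prop :=
  ∀ a : R, ∀ x ∈ I, B.bracket a x ∈ I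

/-- The Poisson core of an ideal `J`: the largest Poisson ideal contained in `J`,
i.e. the sum of all Poisson ideals contained in `J`. -/
def poissonCore {k R : Type*} [CommRing k] [CommRing R] [Algebra k R]
    (B : PoissonBracket k R) (J : Ideal R) : Ideal R :=
  sSup {I : Ideal R | IsPoissonIdeal B I ∧ I ≤ J}

/-- A Poisson-primitive ideal: the Poisson core of some maximal ideal. -/
def IsPoissonPrimitive {k R : Type*} [CommRing k] [CommRing R] [Algebra k R]
    (B : PoissonBracket k R) (P : Ideal R) : Prop :=
  ∃ m : Ideal R, m.IsMaximal ∧ poissonCore B m = P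

open Set Topology PrimeSpectrum

section VeryDense

variable {X Y : Type*} [TopologicalSpace X] [TopologicalSpace Y]

lemma Topology.IsInducing.isIrreducible_of_image {f : X → Y} (hf : IsInducing f) {S : Set X}
    (h : IsIrreducible (f '' S)) : IsIrreducible S := by
  refine ⟨h.nonempty.of_image, fun u v hu hv ⟨x, hxS, hxu⟩ ⟨y, hyS, hyv⟩ => ?_⟩
  obtain ⟨u', hu', rfl⟩ := hf.isOpen_iff.mp hu
  obtain ⟨v', hv', rfl⟩ := hf.isOpen_iff.mp hv
  obtain ⟨_, ⟨z, hzS, rfl⟩, hzu, hzv⟩ :=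
    h.isPreirreducible u' v' hu' hv' ⟨f x, mem_image_of_mem f hxS, hxu⟩
      ⟨f y, mem_image_of_mem f hyS, hyv⟩
  exact ⟨z, hzS, hzu, hzv⟩

/-- Equivalently, `s` meets every nonempty locally closed set: EGA's *très dense* subsets. -/
def IsVeryDense (s : Set X) : Prop :=
  ∀ Z : Set X, IsClosed Z → closure (Z ∩ s) = Z

lemma isVeryDense_closedPoints [JacobsonSpace X] : IsVeryDense (closedPoints X) := fun Z hZ => by
  rw [JacobsonSpace.closure_inter_closedPoints_eq_closure hZ.isLocallyClosed, hZ.closure_eq]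

namespace IsVeryDense

variable {s : Set X}

lemma eq_of_inter_eq (hs : IsVeryDense s) {Z W : Set X} (hZ : IsClosed Z) (hW : IsClosed W)
    (h : Z ∩ s = W ∩ s) : Z = W := by
  rw [← hs Z hZ, h, hs W hW]

lemma continuous_ext_on (hs : IsVeryDense s) [T0Space Y] {F G : X → Y} (hF : Continuous F)
    (hG : Continuous G) (h : EqOn F G s) : F = G := by
  funext x
  refine (inseparable_iff_forall_isClosed.mpr fun W hW => ?_).eq
  have : F ⁻¹' W ∩ s = G ⁻¹' W ∩ s := by
    ext y
    simp only [mem_inter_iff, mem_preimage]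
    exact and_congr_left fun hys => by rw [h hys]
  exact Set.ext_iff.mp (hs.eq_of_inter_eq (hW.preimage hF) (hW.preimage hG) this) x

lemma closure_image_preimage_val (hs : IsVeryDense s) {Z : Set X} (hZ : IsClosed Z) :
    closure (Subtype.val '' (Subtype.val ⁻¹' Z : Set s)) = Z := by
  rw [image_preimage_eq_inter_range, Subtype.range_coe, hs Z hZ]

lemma isIrreducible_preimage_closure_singleton (hs : IsVeryDense s) (x : X) :
    IsIrreducible (Subtype.val ⁻¹' closure {x} : Set s) := by
  refine IsInducing.subtypeVal.isIrreducible_of_image (isIrreducible_iff_closure.mp ?_)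
  rw [hs.closure_image_preimage_val isClosed_closure]
  exact isIrreducible_singleton.closure

lemma mem_closure_image_val_iff (hs : IsVeryDense s) (x : X) {D : Set s} (hD : IsClosed D) :
    x ∈ closure (Subtype.val '' D) ↔ Subtype.val ⁻¹' closure {x} ⊆ D := by
  constructor
  · intro hx z hz
    rw [← hD.closure_eq, IsEmbedding.subtypeVal.closure_eq_preimage_closure_image]
    exact closure_minimal (singleton_subset_iff.mpr hx) isClosed_closure hz
  · intro h
    have hx : x ∈ closure (Subtype.val '' (Subtype.val ⁻¹' closure {x} : Set s)) := by
      rw [hs.closure_image_preimage_val isClosed_closure]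
      exact subset_closure rfl
    exact closure_mono (image_mono h) hx

theorem exists_continuous_extension (hs : IsVeryDense s) [QuasiSober Y] [T0Space Y] (f : s → Y)
    (hf : Continuous f) : ∃ F : X → Y, Continuous F ∧ ∀ x : s, F x = f x := by
  have hC (x : X) : IsIrreducible (f '' (Subtype.val ⁻¹' closure {x})) :=
    (hs.isIrreducible_preimage_closure_singleton x).image f hf.continuousOn
  have hF (x : X) {W : Set Y} (hW : IsClosed W) :
      (hC x).genericPoint ∈ W ↔ x ∈ closure (Subtype.val '' (f ⁻¹' W)) := by
    rw [hs.mem_closure_image_val_iff x (hW.preimage hf), ← image_subset_iff,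
      ← hW.closure_subset_iff, ← (hC x).genericPoint_closure_eq, hW.closure_subset_iff,
      singleton_subset_iff]
  refine ⟨fun x => (hC x).genericPoint, continuous_iff_isClosed.mpr fun W hW => ?_, fun x => ?_⟩
  · convert isClosed_closure (s := Subtype.val '' (f ⁻¹' W))
    ext x
    exact hF x hW
  · refine (inseparable_iff_forall_isClosed.mpr fun W hW => ?_).eq
    rw [hF _ hW, hs.mem_closure_image_val_iff _ (hW.preimage hf),
      ← image_singleton (f := Subtype.val),
      ← IsEmbedding.subtypeVal.closure_eq_preimage_closure_image,
      (hW.preimage hf).closure_subset_iff, singleton_subset_iff, mem_preimage]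

theorem existsUnique_homeomorph_extension (hs : IsVeryDense s) [T0Space X] [QuasiSober X]
    [T0Space Y] [QuasiSober Y] {t : Set Y} (ht : IsVeryDense t) (f : s → t)
    (hf : IsHomeomorph f) :
    ∃! F : X → Y, IsHomeomorph F ∧ ∀ x : s, F x = f x := by
  let e := hf.homeomorph f
  obtain ⟨F, hF, hFf⟩ :=
    hs.exists_continuous_extension (fun x => (f x : Y)) (continuous_subtype_val.comp hf.continuous)
  obtain ⟨G, hG, hGe⟩ := ht.exists_continuous_extension (fun y => (e.symm y : X))
    (continuous_subtype_val.comp e.symm.continuous)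
  have hGF : G ∘ F = id := hs.continuous_ext_on (hG.comp hF) continuous_id fun x hx => by
    simp only [Function.comp_apply, id, hFf ⟨x, hx⟩, hGe]
    exact congrArg Subtype.val (e.symm_apply_apply ⟨x, hx⟩)
  have hFG : F ∘ G = id := ht.continuous_ext_on (hF.comp hG) continuous_id fun y hy => by
    simp only [Function.comp_apply, id, hGe ⟨y, hy⟩, hFf]
    exact congrArg Subtype.val (e.apply_symm_apply ⟨y, hy⟩)
  let E : X ≃ₜ Y := ⟨⟨F, G, congrFun hGF, congrFun hFG⟩, hF, hG⟩
  refine ⟨F, ⟨E.isHomeomorph, hFf⟩, ?_⟩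
  rintro F' ⟨hF', hF'f⟩
  exact hs.continuous_ext_on hF'.continuous hF fun x hx =>
    (hF'f ⟨x, hx⟩).trans (hFf ⟨x, hx⟩).symm

end IsVeryDense

end VeryDense

section PoissonCore

variable {k R : Type*} [CommRing k] [CommRing R] [Algebra k R]

lemma PoissonBracket.bracket_zero_right (B : PoissonBracket k R) (a : R) : B.bracket a 0 = 0 := by
  simpa using B.smul_right 0 a 0

lemma PoissonBracket.bracket_pow_succ (B : PoissonBracket k R) (a x : R) (n : ℕ) :
    B.bracket a (x ^ (n + 1)) = ((n : R) + 1) * x ^ n * B.bracket a x := by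
  induction n with
  | zero => simp
  | succ n ih =>
    rw [pow_succ, B.leibniz, ih]
    push_cast
    ring

variable {B : PoissonBracket k R}

lemma poissonCore_le (J : Ideal R) : poissonCore B J ≤ J :=
  sSup_le fun _ hI => hI.2

lemma le_poissonCore {I J : Ideal R} (hI : IsPoissonIdeal B I) (hIJ : I ≤ J) :
    I ≤ poissonCore B J :=
  le_sSup ⟨hI, hIJ⟩

lemma isPoissonIdeal_poissonCore (J : Ideal R) : IsPoissonIdeal B (poissonCore B J) := by
  intro a x hx
  rw [poissonCore, sSup_eq_iSup'] at hx ⊢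
  refine Submodule.iSup_induction _ (motive := fun x => B.bracket a x ∈ _) hx
    (fun I x hx => Submodule.mem_iSup_of_mem I (I.2.1 a x hx)) ?_ fun x y hx hy => ?_
  · simpa only [B.bracket_zero_right] using zero_mem _
  · simpa only [B.add_right] using add_mem hx hy

/-- Writing a minimal prime `Q` of `I` as a colon ideal `(I : y)` with `y ∉ Q`, the Leibniz rule
applied to `{a, r y} ∈ I` gives `{a, r} y ∈ Q` for `r ∈ Q`. -/
lemma IsPoissonIdeal.of_mem_minimalPrimes [IsNoetherianRing R] {I Q : Ideal R}
    (hI : IsPoissonIdeal B I) (hrad : I.IsRadical) (hQ : Q ∈ I.minimalPrimes) :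
    IsPoissonIdeal B Q := by
  have hQprime : Q.IsPrime := hQ.1.1
  have hcolon : I.colon {(1 : R)} = I := by ext; simp [Submodule.mem_colon_singleton]
  obtain ⟨y, hQy⟩ := Submodule.exists_eq_colon_of_mem_minimalPrimes (hcolon ▸ hQ)
  have hmem (r : R) : r ∈ Q ↔ r * y ∈ I := by
    rw [hQy, Submodule.mem_colon_singleton, smul_eq_mul]
  have hy : y ∉ Q := fun h => hQprime.ne_top <| (Ideal.eq_top_iff_one Q).mpr <|
    (hmem 1).mpr (by simpa using hrad ⟨2, by simpa [pow_two] using (hmem y).mp h⟩)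
  intro a r hr
  have hsum : B.bracket a r * y + r * B.bracket a y ∈ Q := by
    rw [← B.leibniz]
    exact hQ.1.2 (hI a _ ((hmem r).mp hr))
  have : B.bracket a r * y ∈ Q := by
    simpa using Q.sub_mem hsum (Q.mul_mem_right (B.bracket a y) hr)
  exact (hQprime.mem_or_mem this).resolve_right hy

end PoissonCore

lemma Ideal.mem_of_natCast_add_one_mul_mem (k : Type*) {R : Type*} [Field k] [CharZero k]
    [CommRing R] [Algebra k R] {I : Ideal R} (n : ℕ) {z : R} (h : ((n : R) + 1) * z ∈ I) :
    z ∈ I := by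
  have hunit : IsUnit ((n : R) + 1) := by
    simpa using (Nat.cast_add_one_ne_zero n : (n : k) + 1 ≠ 0).isUnit.map (algebraMap k R)
  exact (I.unit_mul_mem_iff_mem hunit).mp h

section CharZero

variable {k R : Type*} [Field k] [CharZero k] [CommRing R] [Algebra k R] {B : PoissonBracket k R}
  {I : Ideal R}

lemma IsPoissonIdeal.pow_mul_bracket_pow_mem_of_pow_succ_mul_mem (hI : IsPoissonIdeal B I)
    {a x : R} {m j : ℕ} (h : x ^ (m + 1) * B.bracket a x ^ (j + 1) ∈ I) :
    x ^ m * B.bracket a x ^ (j + 3) ∈ I := by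
  set d := B.bracket a x
  have key : ((m : R) + 1) * (x ^ m * d ^ (j + 3)) =
      d * B.bracket a (x ^ (m + 1) * d ^ (j + 1))
        - ((j : R) + 1) * B.bracket a d * (x ^ (m + 1) * d ^ (j + 1)) := by
    rw [B.leibniz, B.bracket_pow_succ, B.bracket_pow_succ]
    ring
  refine Ideal.mem_of_natCast_add_one_mul_mem k m ?_
  rw [key]
  exact I.sub_mem (I.mul_mem_left _ (hI a _ h)) (I.mul_mem_left _ h)

lemma IsPoissonIdeal.bracket_pow_mem (hI : IsPoissonIdeal B I) {a x : R} {m j : ℕ}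
    (h : x ^ m * B.bracket a x ^ (j + 1) ∈ I) : B.bracket a x ^ (j + 2 * m + 1) ∈ I := by
  induction m generalizing j with
  | zero => simpa using h
  | succ m ih =>
    simpa only [Nat.mul_succ, ← add_assoc, add_right_comm _ 2] using
      ih (j := j + 2) (hI.pow_mul_bracket_pow_mem_of_pow_succ_mul_mem h)

/-- The classical argument for derivations of `ℚ`-algebras: `x ^ (n + 1) ∈ I` forces
`{a, x} ^ (2 n + 1) ∈ I`. -/
lemma IsPoissonIdeal.radical (hI : IsPoissonIdeal B I) : IsPoissonIdeal B I.radical := by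
  rintro a x ⟨_ | n, hn⟩
  · exact ⟨1, by simpa using I.mul_mem_left (B.bracket a x) hn⟩
  · have h : x ^ n * B.bracket a x ^ (0 + 1) ∈ I := by
      refine Ideal.mem_of_natCast_add_one_mul_mem k n ?_
      simpa [B.bracket_pow_succ, mul_assoc] using hI a _ hn
    exact ⟨_, hI.bracket_pow_mem h⟩

lemma poissonCore_isPrime [IsNoetherianRing R] {P : Ideal R} (hP : P.IsPrime) :
    (poissonCore B P).IsPrime := by
  have hrad : (poissonCore B P).IsRadical :=
    le_poissonCore (isPoissonIdeal_poissonCore P).radical (hP.radical_le_iff.mpr (poissonCore_le P))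
  obtain ⟨Q, hQ, hQP⟩ := Ideal.exists_minimalPrimes_le (poissonCore_le (B := B) P)
  have hQcore : Q = poissonCore B P :=
    le_antisymm (le_poissonCore ((isPoissonIdeal_poissonCore P).of_mem_minimalPrimes hrad hQ) hQP)
      hQ.1.2
  exact hQcore ▸ hQ.1.1

end CharZero

lemma PrimeSpectrum.isVeryDense_setOf_isMaximal {A : Type*} [CommRing A] [IsJacobsonRing A] :
    IsVeryDense {m : PrimeSpectrum A | m.asIdeal.IsMaximal} := by
  convert isVeryDense_closedPoints (X := PrimeSpectrum A)
  ext m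
  exact (isClosed_singleton_iff_isMaximal m).symm

abbrev PoissonPrimeSpectrum {k R : Type*} [CommRing k] [CommRing R] [Algebra k R]
    (B : PoissonBracket k R) :=
  {q : PrimeSpectrum R // IsPoissonIdeal B q.asIdeal}

namespace PoissonPrimeSpectrum

section

variable {k R : Type*} [CommRing k] [CommRing R] [Algebra k R] {B : PoissonBracket k R}

lemma mem_closure_iff {T : Set (PoissonPrimeSpectrum B)} {y : PoissonPrimeSpectrum B} :
    y ∈ closure T ↔ vanishingIdeal (Subtype.val '' T) ≤ y.1.asIdeal := by
  rw [IsEmbedding.subtypeVal.closure_eq_preimage_closure_image, mem_preimage,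
    ← zeroLocus_vanishingIdeal_eq_closure, mem_zeroLocus, SetLike.coe_subset_coe]

lemma isPoissonIdeal_vanishingIdeal (T : Set (PoissonPrimeSpectrum B)) :
    IsPoissonIdeal B (vanishingIdeal (Subtype.val '' T)) := by
  simp only [IsPoissonIdeal, mem_vanishingIdeal]
  rintro a x hx _ ⟨q, hq, rfl⟩
  exact q.2 a x (hx _ ⟨q, hq, rfl⟩)

instance : QuasiSober (PoissonPrimeSpectrum B) where
  sober {S} hS hS' := by
    have hprime := isIrreducible_iff_vanishingIdeal_isPrime.mp
      (hS.image _ continuous_subtype_val.continuousOn)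
    refine ⟨⟨⟨_, hprime⟩, isPoissonIdeal_vanishingIdeal S⟩, ?_⟩
    ext y
    rw [mem_closure_iff, image_singleton, vanishingIdeal_singleton]
    conv_rhs => rw [← hS'.closure_eq, mem_closure_iff]

end

variable {k R : Type*} [Field k] [CharZero k] [CommRing R] [Algebra k R] {B : PoissonBracket k R}

lemma isVeryDense_setOf_isPoissonPrimitive [IsNoetherianRing R] [IsJacobsonRing R] :
    IsVeryDense {y : PoissonPrimeSpectrum B | IsPoissonPrimitive B y.1.asIdeal} := by
  intro Z hZ
  refine (closure_minimal inter_subset_left hZ).antisymm fun y hy =>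
    mem_closure_iff.mpr fun r hr => ?_
  rw [← IsJacobsonRing.out ‹_› y.1.isPrime.isRadical, Ideal.jacobson, Ideal.mem_sInf]
  rintro m ⟨hym, hm⟩
  let n : PoissonPrimeSpectrum B :=
    ⟨⟨poissonCore B m, poissonCore_isPrime hm.isPrime⟩, isPoissonIdeal_poissonCore m⟩
  have hyn : y ⤳ n := by
    rw [subtype_specializes_iff, ← le_iff_specializes]
    exact le_poissonCore y.2 hym
  exact poissonCore_le m
    ((mem_vanishingIdeal _ _).mp hr n.1 ⟨n, ⟨hyn.mem_closed hZ hy, m, hm, rfl⟩, rfl⟩)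

end PoissonPrimeSpectrum

theorem extend_maxSpec_homeomorph_general (k A R : Type*) [Field k] [CharZero k]
    [CommRing A] [IsJacobsonRing A]
    [CommRing R] [Algebra k R] [Algebra.FiniteType k R] (B : PoissonBracket k R)
    (f : {m : PrimeSpectrum A // m.asIdeal.IsMaximal} →
        {p : {q : PrimeSpectrum R // IsPoissonIdeal B q.asIdeal} //
          IsPoissonPrimitive B p.1.asIdeal})
    (hf : IsHomeomorph f) :
    ∃! f' : PrimeSpectrum A → {q : PrimeSpectrum R // IsPoissonIdeal B q.asIdeal},
      IsHomeomorph f' ∧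
        ∀ m : {m : PrimeSpectrum A // m.asIdeal.IsMaximal}, f' m.1 = (f m).1 := by
  have : IsNoetherianRing R := Algebra.FiniteType.isNoetherianRing k R
  have : IsJacobsonRing R := isJacobsonRing_of_finiteType (A := k)
  exact isVeryDense_setOf_isMaximal.existsUnique_homeomorph_extension
    PoissonPrimeSpectrum.isVeryDense_setOf_isPoissonPrimitive f hf

/-- for a commutative noetherian Jacobson ring `A` and a commutative affine
Poisson algebra `R` over a characteristic-zero field, any homeomorphism from the maximal
spectrum of `A` onto the Poisson-primitive spectrum of `R` extends uniquely to a
homeomorphism from `Spec A` onto the Poisson prime spectrum of `R`. -/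
theorem extend_maxSpec_homeomorph (k A R : Type*) [Field k] [CharZero k]
    [CommRing A] [IsNoetherianRing A] [IsJacobsonRing A]
    [CommRing R] [Algebra k R] [Algebra.FiniteType k R] (B : PoissonBracket k R)
    (f : {m : PrimeSpectrum A // m.asIdeal.IsMaximal} →
        {p : {q : PrimeSpectrum R // IsPoissonIdeal B q.asIdeal} //
          IsPoissonPrimitive B p.1.asIdeal})
    (hf : IsHomeomorph f) :
    ∃! f' : PrimeSpectrum A → {q : PrimeSpectrum R // IsPoissonIdeal B q.asIdeal},
      IsHomeomorph f' ∧
        ∀ m : {m : PrimeSpectrum A // m.asIdeal.IsMaximal}, f' m.1 = (f m).1 :=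
  extend_maxSpec_homeomorph_general k A R B f hf
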